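/- arXiv:1207.1084 — 2 statements merged into one kernel-verified Lean document; each statement's English description precedes it below -/
import Mathlib

section
/- If ρ^{AB} is a bipartite density operator on H_A ⊗ H_B and σ^B is a density operator on H_B with support orthogonal to the support of Tr_A ρ^{AB}, then the state ρ_k = (1/k)ρ^{AB} + ((k-1)/k) (Tr_B ρ^{AB}) ⊗ σ^B is k-extendible with respect to the B subsystem: there exists a density operator ω on H_A ⊗ H_B^{⊗k}, symmetric under permutations of the k copies of B, such that the reduced state on A and any single B factor equals ρ_k. -/
open Matrix Kronecker BigOperators
open scoped ComplexOrder

noncomputable section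

/-- A density operator: positive semidefinite with unit trace. -/
def IsDensity {n : Type*} [Fintype n] [DecidableEq n] (ρ : Matrix n n ℂ) : Prop :=
  ρ.PosSemidef ∧ ρ.trace = 1

/-- Partial trace over the `A` factor of a bipartite matrix. -/
def ptraceA {a b : ℕ} (ρ : Matrix (Fin a × Fin b) (Fin a × Fin b) ℂ) :
    Matrix (Fin b) (Fin b) ℂ :=
  fun j j' => ∑ i, ρ (i, j) (i, j')

/-- Partial trace over the `B` factor of a bipartite matrix. -/
def ptraceB {a b : ℕ} (ρ : Matrix (Fin a × Fin b) (Fin a × Fin b) ℂ) :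
    Matrix (Fin a) (Fin a) ℂ :=
  fun i i' => ∑ j, ρ (i, j) (i', j)

/-- The marginal of a state on `A ⊗ B^{⊗k}` on `A` and the `i`-th `B` factor. -/
def margB {a b : ℕ} (k : ℕ) (i : Fin k)
    (ω : Matrix (Fin a × (Fin k → Fin b)) (Fin a × (Fin k → Fin b)) ℂ) :
    Matrix (Fin a × Fin b) (Fin a × Fin b) ℂ :=
  fun p q => ∑ f : Fin k → Fin b,
    if f i = p.2 then ω (p.1, f) (q.1, Function.update f i q.2) else 0

/-- Invariance under permutations of the `k` copies of the `B` factor. -/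
def PermInvB {a b : ℕ} (k : ℕ)
    (ω : Matrix (Fin a × (Fin k → Fin b)) (Fin a × (Fin k → Fin b)) ℂ) : Prop :=
  ∀ (π : Equiv.Perm (Fin k)) (x x' : Fin a) (f g : Fin k → Fin b),
    ω (x, f ∘ π) (x', g ∘ π) = ω (x, f) (x', g)

/-- `ρ` is `k`-extendible with respect to the `B` subsystem. -/
def kExtendible {a b : ℕ} (k : ℕ)
    (ρ : Matrix (Fin a × Fin b) (Fin a × Fin b) ℂ) : Prop :=
  ∃ ω : Matrix (Fin a × (Fin k → Fin b)) (Fin a × (Fin k → Fin b)) ℂ,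
    IsDensity ω ∧ PermInvB k ω ∧ ∀ i : Fin k, margB k i ω = ρ

namespace ErasureAux

variable {a b k : ℕ}

lemma sum_fun_prod (G : Fin k → Fin b → ℂ) :
    ∑ f : Fin k → Fin b, ∏ j, G j (f j) = ∏ j, ∑ c, G j c := by
  classical
  rw [Finset.prod_univ_sum, Fintype.piFinset_univ]

lemma prod_ite_univ {M : Type*} [CommMonoid M] (m : Fin k) (x : M) (F : Fin k → M) :
    (∏ j, (if j = m then x else F j)) = x * ∏ j ∈ Finset.univ.erase m, F j := by
  classical
  rw [← Finset.mul_prod_erase Finset.univ _ (Finset.mem_univ m)]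
  simp only [if_pos rfl]
  congr 1
  exact Finset.prod_congr rfl fun j hj => if_neg (Finset.ne_of_mem_erase hj)

lemma psd_smul {n : Type*} [Fintype n] {M : Matrix n n ℂ} (hM : M.PosSemidef)
    {c : ℂ} (hc : 0 ≤ c) : (c • M).PosSemidef := by
  have him : c.im = 0 := by simpa using ((Complex.le_def.mp hc).2).symm
  have hcr : star c = c := by
    rw [Complex.star_def, Complex.conj_eq_iff_im]; exact him
  constructor
  · rw [Matrix.IsHermitian, conjTranspose_smul, hcr, hM.1]
  · intro x
    exact (hM.smul hc).2 x

/-- The `m`-th term of the symmetric extension. -/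
def Mterm (k : ℕ) (m : Fin k) (ρ : Matrix (Fin a × Fin b) (Fin a × Fin b) ℂ)
    (σ : Matrix (Fin b) (Fin b) ℂ) :
    Matrix (Fin a × (Fin k → Fin b)) (Fin a × (Fin k → Fin b)) ℂ :=
  fun p q => ρ (p.1, p.2 m) (q.1, q.2 m) *
    ∏ j, (if j = m then 1 else σ (p.2 j) (q.2 j))

lemma Mterm_posSemidef [NeZero b] (m : Fin k) {ρ : Matrix (Fin a × Fin b) (Fin a × Fin b) ℂ}
    {σ : Matrix (Fin b) (Fin b) ℂ} (hρ : ρ.PosSemidef) (hσ : σ.PosSemidef) :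
    (Mterm k m ρ σ).PosSemidef := by
  classical
  obtain ⟨R, hR⟩ : ∃ R, ρ = Rᴴ * R := by
    open scoped MatrixOrder in exact CStarAlgebra.nonneg_iff_eq_star_mul_self.mp hρ.nonneg
  obtain ⟨S, hS⟩ : ∃ S, σ = Sᴴ * S := by
    open scoped MatrixOrder in exact CStarAlgebra.nonneg_iff_eq_star_mul_self.mp hσ.nonneg
  have hρe : ∀ x y, ρ x y = ∑ r, star (R r x) * R r y := by
    intro x y; rw [hR]; simp [Matrix.mul_apply]
  have hσe : ∀ x y, σ x y = ∑ c, star (S c x) * S c y := by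
    intro x y; rw [hS]; simp [Matrix.mul_apply]
  set C : Matrix ((Fin a × Fin b) × (Fin k → Fin b)) (Fin a × (Fin k → Fin b)) ℂ :=
    fun r q => R r.1 (q.1, q.2 m) *
      ∏ j, (if j = m then (if r.2 j = 0 then 1 else 0) else S (r.2 j) (q.2 j)) with hC
  have key : Mterm k m ρ σ = Cᴴ * C := by
    ext p q
    have hterm : ∀ r : (Fin a × Fin b) × (Fin k → Fin b),
        Cᴴ p r * C r q =
        (star (R r.1 (p.1, p.2 m)) * R r.1 (q.1, q.2 m)) *
        ∏ j, (if j = m then (if r.2 j = 0 then 1 else 0)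
              else star (S (r.2 j) (p.2 j)) * S (r.2 j) (q.2 j)) := by
      intro r
      have h1 : (∏ j, star (if j = m then (if r.2 j = 0 then (1:ℂ) else 0) else S (r.2 j) (p.2 j))) *
          (∏ j, (if j = m then (if r.2 j = 0 then (1:ℂ) else 0) else S (r.2 j) (q.2 j))) =
          ∏ j, (if j = m then (if r.2 j = 0 then 1 else 0)
                else star (S (r.2 j) (p.2 j)) * S (r.2 j) (q.2 j)) := by
        rw [← Finset.prod_mul_distrib]
        refine Finset.prod_congr rfl fun j _ => ?_
        by_cases hj : j = m
        · subst hj; by_cases h0 : r.2 j = 0 <;> simp [h0]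
        · simp [hj]
      simp only [conjTranspose_apply]; simp only [hC, star_mul', star_prod]
      rw [← h1]
      ring
    have h2 : (∑ h : Fin k → Fin b, ∏ j,
        (if j = m then (if h j = 0 then (1:ℂ) else 0)
         else star (S (h j) (p.2 j)) * S (h j) (q.2 j)))
        = ∏ j, (if j = m then 1 else σ (p.2 j) (q.2 j)) := by
      rw [sum_fun_prod (fun j c => if j = m then (if c = 0 then (1:ℂ) else 0)
            else star (S c (p.2 j)) * S c (q.2 j))]
      refine Finset.prod_congr rfl fun j _ => ?_
      by_cases hj : j = m
      · simp [hj]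
      · simp only [hj, if_false]
        exact (hσe (p.2 j) (q.2 j)).symm
    rw [Matrix.mul_apply, Finset.sum_congr rfl fun r _ => hterm r, Fintype.sum_prod_type]
    simp only [← Finset.mul_sum]
    rw [show (∑ x : Fin a × Fin b, (star (R x (p.1, p.2 m)) * R x (q.1, q.2 m)) *
          (∑ h : Fin k → Fin b, ∏ j,
            (if j = m then (if h j = 0 then (1:ℂ) else 0)
             else star (S (h j) (p.2 j)) * S (h j) (q.2 j))))
        = (∑ x : Fin a × Fin b, star (R x (p.1, p.2 m)) * R x (q.1, q.2 m)) *
          (∏ j, (if j = m then 1 else σ (p.2 j) (q.2 j))) from by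
      rw [← h2, Finset.sum_mul]]
    rw [Mterm, ← hρe]
  rw [key]
  exact Matrix.posSemidef_conjTranspose_mul_self C

lemma claim1 (i : Fin k) (ρ : Matrix (Fin a × Fin b) (Fin a × Fin b) ℂ)
    (σ : Matrix (Fin b) (Fin b) ℂ) (hσt : σ.trace = 1) (p q : Fin a × Fin b) :
    (∑ f : Fin k → Fin b,
      if f i = p.2 then Mterm k i ρ σ (p.1, f) (q.1, Function.update f i q.2) else 0)
      = ρ p q := by
  classical
  set G : Fin k → Fin b → ℂ :=
    fun j c => if j = i then (if c = p.2 then ρ (p.1, c) (q.1, q.2) else 0) else σ c c with hG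
  have hstep : ∀ f : Fin k → Fin b,
      (if f i = p.2 then Mterm k i ρ σ (p.1, f) (q.1, Function.update f i q.2) else 0)
        = ∏ j, G j (f j) := by
    intro f
    have hprod : (∏ j, (if j = i then (1:ℂ)
          else σ (f j) (Function.update f i q.2 j)))
        = ∏ j, (if j = i then 1 else σ (f j) (f j)) := by
      refine Finset.prod_congr rfl fun j _ => ?_
      by_cases hj : j = i
      · simp [hj]
      · simp [hj, Function.update_of_ne hj]
    have hrhs : (∏ j, G j (f j)) =
        (if f i = p.2 then ρ (p.1, f i) (q.1, q.2) else 0) *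
        ∏ j ∈ Finset.univ.erase i, σ (f j) (f j) := by
      rw [show (∏ j, G j (f j)) = ∏ j, (if j = i
            then (if f i = p.2 then ρ (p.1, f i) (q.1, q.2) else 0)
            else σ (f j) (f j)) from Finset.prod_congr rfl fun j _ => by
        by_cases hj : j = i
        · subst hj; simp [hG]
        · simp [hG, hj]]
      exact prod_ite_univ i _ (fun j => σ (f j) (f j))
    rw [hrhs]
    simp only [Mterm, Function.update_self, hprod, prod_ite_univ i (1:ℂ) (fun j => σ (f j) (f j))]
    split_ifs with h
    · ring
    · simp
  rw [Finset.sum_congr rfl fun f _ => hstep f, sum_fun_prod]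
  have hcol : ∀ j, (∑ c, G j c) = if j = i then ρ (p.1, p.2) (q.1, q.2) else 1 := by
    intro j
    by_cases hj : j = i
    · simp [hG, hj]
    · simp only [hG, hj, if_false]
      simpa [Matrix.trace, Matrix.diag] using hσt
  rw [Finset.prod_congr rfl fun j _ => hcol j, prod_ite_univ]
  simp

lemma claim2 {i m : Fin k} (hmi : m ≠ i) (ρ : Matrix (Fin a × Fin b) (Fin a × Fin b) ℂ)
    (σ : Matrix (Fin b) (Fin b) ℂ) (hσt : σ.trace = 1) (p q : Fin a × Fin b) :
    (∑ f : Fin k → Fin b,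
      if f i = p.2 then Mterm k m ρ σ (p.1, f) (q.1, Function.update f i q.2) else 0)
      = ptraceB ρ p.1 q.1 * σ p.2 q.2 := by
  classical
  set G : Fin k → Fin b → ℂ :=
    fun j c => if j = m then ρ (p.1, c) (q.1, c)
      else if j = i then (if c = p.2 then σ c q.2 else 0) else σ c c with hG
  have hstep : ∀ f : Fin k → Fin b,
      (if f i = p.2 then Mterm k m ρ σ (p.1, f) (q.1, Function.update f i q.2) else 0)
        = ∏ j, G j (f j) := by
    intro f
    have hGf : (∏ j, G j (f j)) = ∏ j, (if j = m then ρ (p.1, f m) (q.1, f m)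
        else if j = i then (if f i = p.2 then σ (f i) q.2 else 0) else σ (f j) (f j)) := by
      refine Finset.prod_congr rfl fun j _ => ?_
      by_cases hj : j = m
      · subst hj; simp [hG]
      · by_cases hji : j = i
        · subst hji; simp [hG, hj]
        · simp [hG, hj, hji]
    have hMf : Mterm k m ρ σ (p.1, f) (q.1, Function.update f i q.2)
        = ρ (p.1, f m) (q.1, f m) *
          ∏ j, (if j = m then 1 else if j = i then σ (f i) q.2 else σ (f j) (f j)) := by
      simp only [Mterm]
      rw [Function.update_of_ne hmi]
      congr 1
      refine Finset.prod_congr rfl fun j _ => ?_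
      by_cases hj : j = m
      · simp [hj]
      · by_cases hji : j = i
        · subst hji; simp [hj, Function.update_self]
        · simp [hj, hji, Function.update_of_ne hji]
    rw [hGf, hMf]
    by_cases h : f i = p.2
    · rw [if_pos h,
          prod_ite_univ m (1:ℂ) (fun j => if j = i then σ (f i) q.2 else σ (f j) (f j)),
          prod_ite_univ m (ρ (p.1, f m) (q.1, f m))
            (fun j => if j = i then (if f i = p.2 then σ (f i) q.2 else 0) else σ (f j) (f j)),
          Finset.prod_congr rfl (fun j _ => by
            by_cases hji : j = i
            · simp [hji, h]
            · simp [hji] :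
            ∀ j ∈ Finset.univ.erase m,
              (if j = i then (if f i = p.2 then σ (f i) q.2 else 0) else σ (f j) (f j))
              = (if j = i then σ (f i) q.2 else σ (f j) (f j)))]
      ring
    · rw [if_neg h]
      symm
      refine Finset.prod_eq_zero (Finset.mem_univ i) ?_
      simp [Ne.symm hmi, h]
  rw [Finset.sum_congr rfl fun f _ => hstep f, sum_fun_prod]
  have hi' : i ∈ Finset.univ.erase m := by
    simp [Ne.symm hmi]
  rw [← Finset.mul_prod_erase Finset.univ _ (Finset.mem_univ m),
      ← Finset.mul_prod_erase _ _ hi']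
  have h1 : (∑ c, G m c) = ptraceB ρ p.1 q.1 := by simp [hG, ptraceB]
  have h2 : (∑ c, G i c) = σ p.2 q.2 := by simp [hG, hmi.symm]
  have h3 : ∀ j ∈ (Finset.univ.erase m).erase i, (∑ c, G j c) = 1 := by
    intro j hj
    obtain ⟨hji, hjm'⟩ := Finset.mem_erase.mp hj
    obtain ⟨hjm, -⟩ := Finset.mem_erase.mp hjm'
    simp only [hG, hjm, hji, if_false]
    simpa [Matrix.trace, Matrix.diag] using hσt
  rw [h1, h2, Finset.prod_congr rfl h3]
  simp

lemma trace_margB (i : Fin k)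
    (ω : Matrix (Fin a × (Fin k → Fin b)) (Fin a × (Fin k → Fin b)) ℂ) :
    (margB k i ω).trace = ω.trace := by
  classical
  simp only [Matrix.trace, Matrix.diag, margB]
  rw [Fintype.sum_prod_type, Fintype.sum_prod_type]
  refine Finset.sum_congr rfl fun x _ => ?_
  rw [Finset.sum_comm]
  refine Finset.sum_congr rfl fun f _ => ?_
  rw [Finset.sum_ite_eq]
  simp [Function.update_eq_self]

end ErasureAux

open ErasureAux
theorem erasure_like_is_k_extendible {a b : ℕ} (k : ℕ) (hk : 1 ≤ k)
    (ρ : Matrix (Fin a × Fin b) (Fin a × Fin b) ℂ)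
    (σ : Matrix (Fin b) (Fin b) ℂ)
    (hρ : IsDensity ρ) (hσ : IsDensity σ)
    (horth : ptraceA ρ * σ = 0) :
    kExtendible k
      (((1 : ℂ) / k) • ρ + (((k : ℂ) - 1) / k) • (ptraceB ρ ⊗ₖ σ)) := by
  classical
  have hb : b ≠ 0 := by
    rintro rfl
    have := hρ.2
    simp [Matrix.trace] at this
  haveI : NeZero b := ⟨hb⟩
  have hkc : (k : ℂ) ≠ 0 := Nat.cast_ne_zero.mpr (by omega)
  set ω : Matrix (Fin a × (Fin k → Fin b)) (Fin a × (Fin k → Fin b)) ℂ :=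
    ((1 : ℂ) / k) • ∑ m, Mterm k m ρ σ with hω
  have hmarg : ∀ i : Fin k, margB k i ω =
      ((1 : ℂ) / k) • ρ + (((k : ℂ) - 1) / k) • (ptraceB ρ ⊗ₖ σ) := by
    intro i
    ext p q
    have hentry : ∀ f : Fin k → Fin b,
        (if f i = p.2 then ω (p.1, f) (q.1, Function.update f i q.2) else 0)
          = ((1 : ℂ) / k) * ∑ m, (if f i = p.2
              then Mterm k m ρ σ (p.1, f) (q.1, Function.update f i q.2) else 0) := by
      intro f
      by_cases h : f i = p.2
      · simp [h, hω, Matrix.smul_apply, Matrix.sum_apply, Finset.mul_sum]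
      · simp [h]
    simp only [margB]
    rw [Finset.sum_congr rfl fun f _ => hentry f, ← Finset.mul_sum, Finset.sum_comm]
    rw [Finset.sum_congr rfl (fun m _ => rfl), ← Finset.sum_erase_add _ _ (Finset.mem_univ i)]
    rw [claim1 i ρ σ hσ.2 p q,
        Finset.sum_congr rfl (fun m hm => claim2 (Finset.mem_erase.mp hm).1 ρ σ hσ.2 p q),
        Finset.sum_const, Finset.card_erase_of_mem (Finset.mem_univ i), Finset.card_univ,
        Fintype.card_fin]
    have hcast : ((k - 1 : ℕ) : ℂ) = (k : ℂ) - 1 := by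
      push_cast [Nat.cast_sub hk]; ring
    simp only [nsmul_eq_mul, hcast, Matrix.add_apply, Matrix.smul_apply,
      Matrix.kroneckerMap_apply, smul_eq_mul]
    ring
  refine ⟨ω, ⟨?_, ?_⟩, ?_, hmarg⟩
  · -- positive semidefinite
    have hsum : (∑ m, Mterm k m ρ σ).PosSemidef := by
      refine Finset.sum_induction _ _ (fun A B hA hB => hA.add hB) Matrix.PosSemidef.zero
        (fun m _ => Mterm_posSemidef m hρ.1 hσ.1)
    have hnn : (0 : ℂ) ≤ (1 : ℂ) / k := by
      have h1 : (((1 / k : ℝ)) : ℂ) = (1 : ℂ) / k := by push_cast; ring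
      rw [← h1, Complex.zero_le_real]
      positivity
    exact psd_smul hsum hnn
  · -- unit trace
    have i0 : Fin k := ⟨0, hk⟩
    have := trace_margB i0 ω
    rw [hmarg i0] at this
    rw [← this]
    have htrB : (ptraceB ρ).trace = ρ.trace := by
      simp [Matrix.trace, Matrix.diag, ptraceB, Fintype.sum_prod_type]
    rw [Matrix.trace_add, Matrix.trace_smul, Matrix.trace_smul, Matrix.trace_kronecker,
        htrB, hρ.2, hσ.2]
    rw [smul_eq_mul, smul_eq_mul]; simp only [mul_one]; rw [← add_div, add_sub_cancel, div_self hkc]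
  · -- permutation invariance
    intro π x x' f g
    simp only [hω, Matrix.smul_apply, Matrix.sum_apply]
    congr 1
    calc (∑ m, Mterm k m ρ σ (x, f ∘ π) (x', g ∘ π))
        = ∑ m, Mterm k (π m) ρ σ (x, f) (x', g) := by
          refine Finset.sum_congr rfl fun m _ => ?_
          simp only [Mterm, Function.comp_apply]
          congr 1
          calc (∏ j, if j = m then (1:ℂ) else σ (f (π j)) (g (π j)))
              = ∏ j, (if π j = π m then (1:ℂ) else σ (f (π j)) (g (π j))) :=
                Finset.prod_congr rfl fun j _ => by simp [EmbeddingLike.apply_eq_iff_eq]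
            _ = ∏ j, (if j = π m then (1:ℂ) else σ (f j) (g j)) :=
                Equiv.prod_comp π (fun j => if j = π m then (1:ℂ) else σ (f j) (g j))
      _ = ∑ m, Mterm k m ρ σ (x, f) (x', g) :=
          Equiv.sum_comp π (fun m => Mterm k m ρ σ (x, f) (x', g))
end
end

section
/- For the Bell-diagonal two-qubit state ρ = λ₁Φ⁺ + λ₂Φ⁻ + λ₃Ψ⁺ + λ₄Ψ⁻ with λᵢ ≥ 0, Σλᵢ = 1, set α₁ = λ₁ − λ₂ − λ₃ + λ₄, α₂ = √2(λ₁ − λ₄), α₃ = √2(λ₂ − λ₃). There exist choices of (λ₁, λ₂, λ₃, λ₄) simultaneously satisfying (i) the 2-extendibility condition 4α₁(α₂² − α₃²) − (α₂² − α₃²)² − 4α₁²(α₂² + α₃²) ≥ 0 (or one of the alternative conditions α₂² − α₃² − 2√2 α₁|α₂| ≥ 0, α₃² − α₂² + 2√2 α₁|α₃| ≥ 0), and (ii) the key-distillability condition (λ_max − λ_min)² > (1 − λ_max − λ_min)(λ_max + λ_min), where λ_max = max λᵢ, λ_min = min λᵢ. -/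
/-- There exist Bell-diagonal eigenvalues `(λ₁, λ₂, λ₃, λ₄)` simultaneously satisfying one
of the 2-extendibility conditions and the two-way key-distillability condition. -/
theorem exists_extendible_key_distillable_bell_diagonal :
    ∃ l1 l2 l3 l4 : ℝ,
      0 ≤ l1 ∧ 0 ≤ l2 ∧ 0 ≤ l3 ∧ 0 ≤ l4 ∧ l1 + l2 + l3 + l4 = 1 ∧
      (let a1 := l1 - l2 - l3 + l4
       let a2 := Real.sqrt 2 * (l1 - l4)
       let a3 := Real.sqrt 2 * (l2 - l3)
       (4 * a1 * (a2 ^ 2 - a3 ^ 2) - (a2 ^ 2 - a3 ^ 2) ^ 2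
          - 4 * a1 ^ 2 * (a2 ^ 2 + a3 ^ 2) ≥ 0) ∨
       (a2 ^ 2 - a3 ^ 2 - 2 * Real.sqrt 2 * a1 * |a2| ≥ 0) ∨
       (a3 ^ 2 - a2 ^ 2 + 2 * Real.sqrt 2 * a1 * |a3| ≥ 0)) ∧
      (let lmax := max (max l1 l2) (max l3 l4)
       let lmin := min (min l1 l2) (min l3 l4)
       (lmax - lmin) ^ 2 > (1 - lmax - lmin) * (lmax + lmin)) := by
  refine ⟨1/5, 3/5, 0, 1/5, by norm_num, by norm_num, le_refl 0, by norm_num, by norm_num,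
    ?_, ?_⟩
  · right; right
    have h2 : Real.sqrt 2 * Real.sqrt 2 = 2 := Real.mul_self_sqrt (by norm_num)
    have hpos : (0:ℝ) ≤ Real.sqrt 2 * (3/5 - 0) := by positivity
    rw [abs_of_nonneg hpos]
    nlinarith [h2]
  · norm_num
end
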